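/- Let n be a positive integer and λ an infinite cardinal, and let τ be a shift-continuous T₁ topology on I_λ^n. If (I_λ^n, τ) is N_d-compact (every continuous map to the discrete space ℕ has compact, i.e. finite, image), then τ is feebly compact. -/

import Mathlib

open Set Topology

universe v

namespace ISemi

/-- The set of partial injective transformations (partial bijections) of `ι`
with rank (cardinality of the range, equivalently of the domain) at most `n`. -/
def Elem (ι : Type*) (n : ℕ) : Type _ :=
  {f : ι ≃. ι // {a : ι | (f a).isSome}.encard ≤ (n : ℕ∞)}

variable {ι : Type*} {n : ℕ}

/-- Composition of partial bijections (written multiplicatively). -/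
instance : Semigroup (Elem ι n) where
  mul f g := ⟨f.1.trans g.1, by
    refine le_trans (Set.encard_mono ?_) f.2
    intro a ha
    simp only [Set.mem_setOf_eq] at *
    rcases Option.isSome_iff_exists.1 ha with ⟨c, hc⟩
    rcases (PEquiv.trans_eq_some _ _ _ _).1 hc with ⟨b, hb, -⟩
    simp [hb]⟩
  mul_assoc f g h := Subtype.ext (PEquiv.trans_assoc f.1 g.1 h.1)

/-- The inverse partial bijection. -/
def inv (f : Elem ι n) : Elem ι n := ⟨f.1.symm, by
  have key : ∀ (g : ι ≃. ι), {b : ι | (g.symm b).isSome} ⊆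
      (fun p : {a : ι | (g a).isSome} => (g p.1).get p.2) '' Set.univ := by
    intro g b hb
    rcases Option.isSome_iff_exists.1 hb with ⟨a, ha⟩
    have ha' : b ∈ g a := (PEquiv.mem_iff_mem g).1 (Option.mem_def.2 ha)
    simp only [Option.mem_def] at ha'
    refine ⟨⟨a, ?_⟩, Set.mem_univ _, ?_⟩
    · simp [Set.mem_setOf_eq, ha']
    · simp [ha']
  calc {b : ι | (f.1.symm b).isSome}.encard
      ≤ ((fun p : {a : ι | (f.1 a).isSome} => (f.1 p.1).get p.2) '' Set.univ).encard :=
        Set.encard_mono (key f.1)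
    _ ≤ (Set.univ : Set {a : ι | (f.1 a).isSome}).encard := Set.encard_image_le _ _
    _ = {a : ι | (f.1 a).isSome}.encard := by rw [Set.encard_univ, ENat.card_coe_set_eq]
    _ ≤ (n : ℕ∞) := f.2⟩

/-- The zero (the empty partial map). -/
def zero (ι : Type*) (n : ℕ) : Elem ι n := ⟨⊥, by simp [PEquiv.bot_apply]⟩

/-- idempotents -/
def IsIdem (e : Elem ι n) : Prop := e * e = e

/-- The natural partial order on the inverse semigroup `Elem ι n`:
`f ≼ g` iff `f = e * g` for some idempotent `e`. -/
def nle (f g : Elem ι n) : Prop := ∃ e : Elem ι n, IsIdem e ∧ f = e * g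

/-- up-set of `f` w.r.t. the natural partial order -/
def upset (f : Elem ι n) : Set (Elem ι n) := {g | nle f g}

/-- the rank of a partial bijection: the cardinality of its domain (= range) -/
noncomputable def rank (f : Elem ι n) : ℕ∞ := {a : ι | (f.1 a).isSome}.encard

def dom (f : Elem ι n) : Set ι := {a : ι | (f.1 a).isSome}

def ran (f : Elem ι n) : Set ι := {b : ι | (f.1.symm b).isSome}

/-- A topology on `Elem ι n` is shift-continuous if all left and right
translations are continuous. -/
def ShiftContinuous (ι : Type*) (n : ℕ) [TopologicalSpace (Elem ι n)] : Prop :=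
  ∀ a : Elem ι n, Continuous (fun x : Elem ι n => a * x) ∧
    Continuous (fun x : Elem ι n => x * a)

/-- A space is feebly compact if every locally finite family of nonempty open
sets is finite. -/
def FeeblyCompact (X : Type*) [TopologicalSpace X] : Prop :=
  ∀ 𝒰 : Set (Set X), (∀ U ∈ 𝒰, IsOpen U ∧ U.Nonempty) →
    LocallyFinite (fun U : 𝒰 => (U : Set X)) → 𝒰.Finite

/-- A space is `d`-feebly compact if every discrete family of open sets is
finite; a family is discrete if every point has a neighbourhood meeting at
most one member of the family. -/
def DFeeblyCompact (X : Type*) [TopologicalSpace X] : Prop :=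
  ∀ 𝒰 : Set (Set X), (∀ U ∈ 𝒰, IsOpen U) →
    (∀ x : X, ∃ V ∈ 𝓝 x, {U ∈ 𝒰 | (U ∩ V).Nonempty}.Subsingleton) → 𝒰.Finite

/-- countably pracompact: there is a dense set `A` such that every infinite
subset of `A` has an accumulation point in `X`. -/
def CountablyPracompact (X : Type*) [TopologicalSpace X] : Prop :=
  ∃ A : Set X, Dense A ∧ ∀ B ⊆ A, B.Infinite → ∃ x : X, AccPt x (Filter.principal B)

/-- H-closed: closed in every Hausdorff space in which it embeds. -/
def HClosed (X : Type*) [TopologicalSpace X] : Prop :=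
  ∀ (Y : Type v) (_ : TopologicalSpace Y), T2Space Y →
    ∀ e : X → Y, IsEmbedding e → IsClosed (Set.range e)

/-- infra H-closed: every continuous image in a first-countable Hausdorff
space is closed. -/
def InfraHClosed (X : Type*) [TopologicalSpace X] : Prop :=
  ∀ (Y : Type v) (_ : TopologicalSpace Y), T2Space Y →
    FirstCountableTopology Y → ∀ f : X → Y, Continuous f → IsClosed (Set.range f)

/-- `Y`-compactness: every continuous image in `Y` is compact. -/
def YCompact (X : Type*) [TopologicalSpace X] (Y : Type*) [TopologicalSpace Y] : Prop :=
  ∀ f : X → Y, Continuous f → IsCompact (Set.range f)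

/-- scattered: every nonempty subset has a point isolated in it. -/
def Scattered (X : Type*) [TopologicalSpace X] : Prop :=
  ∀ S : Set X, S.Nonempty → ∃ x ∈ S, ∃ U : Set X, IsOpen U ∧ U ∩ S = {x}

/-- semiregular: there is a base consisting of regular open sets. -/
def Semiregular (X : Type*) [TopologicalSpace X] : Prop :=
  ∃ B : Set (Set X), TopologicalSpace.IsTopologicalBasis B ∧
    ∀ U ∈ B, interior (closure U) = U

/-- countably compact: every countable open cover has a finite subcover. -/
def CountablyCompact (X : Type*) [TopologicalSpace X] : Prop :=
  ∀ 𝒰 : Set (Set X), 𝒰.Countable → (∀ U ∈ 𝒰, IsOpen U) → ⋃₀ 𝒰 = Set.univ →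
    ∃ 𝒱 ⊆ 𝒰, 𝒱.Finite ∧ ⋃₀ 𝒱 = Set.univ

end ISemi

/-!
In a shift-continuous T₁ topology on `I_λ^n` every nonempty open set `U` contains an isolated
point: take `x ∈ U` of maximal rank. The map `z ↦ x⁻¹ z x⁻¹` is continuous and takes only finitely
many values (partial bijections from `ran x` to `dom x`), so its fibre over `x⁻¹`, which is the
set of extensions of `x`, is open; by maximality of the rank it meets `U` only in `x`.

Choosing an isolated point in each member of an infinite locally finite family of nonempty open
sets yields an infinite closed set of isolated points; numbering countably many of them and
sending everything else to `0` gives a continuous map to `ℕ` with infinite image.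
-/

open Function

section IsolatedPoints

variable {X : Type*} [TopologicalSpace X]

theorem isOpen_preimage_singleton_of_finite_range {Y : Type*} [TopologicalSpace Y] [T1Space Y]
    {φ : X → Y} (hφ : Continuous φ) (hfin : (range φ).Finite) (y : Y) :
    IsOpen (φ ⁻¹' {y}) := by
  have : φ ⁻¹' {y} = (φ ⁻¹' (range φ \ {y}))ᶜ := by ext; simp
  rw [this]
  exact ((hfin.subset sdiff_subset).isClosed.preimage hφ).isOpen_compl

theorem not_yCompact_nat_of_locallyFinite_isolated [T1Space X] {e : ℕ → X} (he : Injective e)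
    (hiso : ∀ k, IsOpen {e k}) (hlf : LocallyFinite fun k => ({e k} : Set X)) :
    ¬ ISemi.YCompact X ℕ := by
  intro hN
  have hclosed : IsClosed (range e) := by
    simpa only [iUnion_singleton_eq_range] using hlf.isClosed_iUnion fun _ => isClosed_singleton
  set f : X → ℕ := extend e Nat.succ 0
  have hf : Continuous f := by
    refine IsLocallyConstant.continuous <| (IsLocallyConstant.iff_exists_open f).2 fun x => ?_
    by_cases hx : x ∈ range e
    · obtain ⟨k, rfl⟩ := hx
      exact ⟨{e k}, hiso k, rfl, fun x' hx' => by rw [mem_singleton_iff.1 hx']⟩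
    · refine ⟨(range e)ᶜ, hclosed.isOpen_compl, hx, fun x' hx' => ?_⟩
      simp only [f, extend_apply' _ _ _ hx', extend_apply' _ _ _ hx, Pi.zero_apply]
  have hfe : f ∘ e = Nat.succ := funext (he.extend_apply _ _)
  have hinf : (range (f ∘ e)).Infinite := by
    rw [hfe]; exact infinite_range_of_injective Nat.succ_injective
  exact hinf (((hN f hf).finite_of_discrete).subset (range_comp_subset_range e f))

theorem feeblyCompact_of_yCompact_nat [T1Space X]
    (hiso : ∀ U : Set X, IsOpen U → U.Nonempty → ∃ x ∈ U, IsOpen {x})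
    (hN : ISemi.YCompact X ℕ) : ISemi.FeeblyCompact X := by
  intro 𝒰 h𝒰 hlf
  by_contra hinf
  choose p hpU hpiso using fun U : 𝒰 => hiso U (h𝒰 U U.2).1 (h𝒰 U U.2).2
  have hrange : (range p).Infinite := by
    refine fun hfin => hinf (finite_coe_iff.1 (finite_univ_iff.1 ?_))
    rw [← preimage_range p]
    exact hfin.preimage' fun x _ => (hlf.point_finite x).subset fun U hU => hU ▸ hpU U
  set u : ℕ → 𝒰 := rangeSplitting p ∘ hrange.natEmbedding _
  have hu : Injective (p ∘ u) := by
    simpa only [u, ← comp_assoc, comp_rangeSplitting] using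
      Subtype.val_injective.comp (hrange.natEmbedding _).injective
  exact not_yCompact_nat_of_locallyFinite_isolated hu (fun k => hpiso (u k))
    ((hlf.comp_injective hu.of_comp).subset fun k => singleton_subset_iff.2 (hpU (u k))) hN

end IsolatedPoints

theorem PEquiv.symm_trans_trans_symm_eq_symm_iff {α β : Type*} {f g : α ≃. β} :
    (f.symm.trans g).trans f.symm = f.symm ↔ f ≤ g := by
  refine ⟨fun h => PEquiv.le_def.2 fun a b hab => ?_,
    fun h => PEquiv.ext fun b => Option.ext fun a => ?_⟩
  · have hb : a ∈ ((f.symm.trans g).trans f.symm) b := by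
      rw [h]; exact (PEquiv.mem_iff_mem f).2 hab
    obtain ⟨c, ⟨a', ha', hc⟩, hca⟩ := by simpa only [PEquiv.mem_trans] using hb
    rw [PEquiv.mem_iff_mem f] at ha' hca
    obtain rfl : a' = a := f.inj ha' hab
    obtain rfl : c = b := Option.some_injective _ (hca.symm.trans hab)
    exact hc
  · change a ∈ ((f.symm.trans g).trans f.symm) b ↔ a ∈ f.symm b
    simp only [PEquiv.mem_trans, PEquiv.mem_iff_mem f]
    constructor
    · rintro ⟨c, ⟨a', ha', hc⟩, hca⟩
      obtain rfl : c = b := Option.some_injective _ (hc.symm.trans (PEquiv.le_def.1 h _ _ ha'))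
      exact hca
    · exact fun hb => ⟨b, ⟨a, hb, PEquiv.le_def.1 h _ _ hb⟩, hb⟩

namespace ISemi

variable {ι : Type*} {n : ℕ}

theorem dom_finite (f : Elem ι n) : (dom f).Finite :=
  finite_of_encard_le_coe f.2

theorem ran_finite (f : Elem ι n) : (ran f).Finite :=
  dom_finite (inv f)

theorem ncard_dom_le (f : Elem ι n) : (dom f).ncard ≤ n :=
  (encard_le_coe_iff_finite_ncard_le.1 f.2).2

theorem dom_mul_subset (f g : Elem ι n) : dom (f * g) ⊆ dom f := by
  intro a ha
  obtain ⟨c, hc⟩ := Option.isSome_iff_exists.1 ha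
  obtain ⟨b, hb, -⟩ := (PEquiv.trans_eq_some _ _ _ _).1 hc
  exact Option.isSome_iff_exists.2 ⟨b, hb⟩

theorem ran_mul_subset (f g : Elem ι n) : ran (f * g) ⊆ ran g := by
  change {b | ((f.1.trans g.1).symm b).isSome} ⊆ _
  rw [PEquiv.symm_trans_rev]
  exact dom_mul_subset (inv g) (inv f)

def graph (f : Elem ι n) : Set (ι × ι) := {p | p.2 ∈ f.1 p.1}

theorem graph_injective : Injective (graph : Elem ι n → Set (ι × ι)) :=
  fun _ _ h => Subtype.ext (PEquiv.ext fun a => Option.ext fun b => Set.ext_iff.1 h (a, b))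

theorem graph_subset_dom_prod_ran (f : Elem ι n) : graph f ⊆ dom f ×ˢ ran f :=
  fun _ hp => ⟨Option.isSome_iff_exists.2 ⟨_, hp⟩,
    Option.isSome_iff_exists.2 ⟨_, (PEquiv.mem_iff_mem _).2 hp⟩⟩

theorem finite_setOf_dom_subset_ran_subset {A B : Set ι} (hA : A.Finite) (hB : B.Finite) :
    {f : Elem ι n | dom f ⊆ A ∧ ran f ⊆ B}.Finite :=
  ((hA.prod hB).finite_subsets.preimage graph_injective.injOn).subset
    fun f hf => (graph_subset_dom_prod_ran f).trans (prod_mono hf.1 hf.2)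

theorem eq_of_le_of_ncard_dom_le {f g : Elem ι n} (hle : f.1 ≤ g.1)
    (hcard : (dom g).ncard ≤ (dom f).ncard) : f = g := by
  have hsub : dom f ⊆ dom g := fun a ha => by
    obtain ⟨b, hb⟩ := Option.isSome_iff_exists.1 ha
    exact Option.isSome_iff_exists.2 ⟨b, PEquiv.le_def.1 hle a b hb⟩
  have hdom : dom f = dom g := eq_of_subset_of_ncard_le hsub hcard (dom_finite g)
  refine Subtype.ext (PEquiv.ext fun a => ?_)
  cases hfa : f.1 a with
  | some b => exact (PEquiv.le_def.1 hle a b hfa).symm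
  | none =>
    have ha : a ∉ dom g := hdom ▸ by simp [dom, hfa]
    exact (Option.not_isSome_iff_eq_none.1 ha).symm

theorem exists_mem_forall_ncard_dom_le {U : Set (Elem ι n)} (hU : U.Nonempty) :
    ∃ x ∈ U, ∀ z ∈ U, (dom z).ncard ≤ (dom x).ncard := by
  have hfin : ((fun f : Elem ι n => (dom f).ncard) '' U).Finite :=
    (finite_Iic n).subset (by rintro _ ⟨f, -, rfl⟩; exact ncard_dom_le f)
  obtain ⟨_, ⟨x, hxU, rfl⟩, hmax⟩ := exists_max_image _ id hfin (hU.image _)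
  exact ⟨x, hxU, fun z hz => hmax _ ⟨z, hz, rfl⟩⟩

variable [TopologicalSpace (Elem ι n)] [T1Space (Elem ι n)]

theorem isOpen_setOf_le (hshift : ShiftContinuous ι n) (x : Elem ι n) :
    IsOpen {z : Elem ι n | x.1 ≤ z.1} := by
  set φ : Elem ι n → Elem ι n := fun z => inv x * z * inv x
  have hφ : Continuous φ := (hshift (inv x)).2.comp (hshift (inv x)).1
  have hrange : (range φ).Finite :=
    (finite_setOf_dom_subset_ran_subset (ran_finite x) (dom_finite x)).subset <| by
      rintro _ ⟨z, rfl⟩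
      exact ⟨(dom_mul_subset _ _).trans (dom_mul_subset _ _), ran_mul_subset _ _⟩
  have hfibre : {z : Elem ι n | x.1 ≤ z.1} = φ ⁻¹' {inv x} := by
    ext z
    exact (Subtype.ext_iff.trans PEquiv.symm_trans_trans_symm_eq_symm_iff).symm
  rw [hfibre]
  exact isOpen_preimage_singleton_of_finite_range hφ hrange _

theorem exists_isOpen_singleton_mem (hshift : ShiftContinuous ι n) {U : Set (Elem ι n)}
    (hU : IsOpen U) (hne : U.Nonempty) : ∃ x ∈ U, IsOpen {x} := by
  obtain ⟨x, hxU, hmax⟩ := exists_mem_forall_ncard_dom_le hne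
  have hx : {x} = {z : Elem ι n | x.1 ≤ z.1} ∩ U :=
    Subset.antisymm (singleton_subset_iff.2 ⟨le_refl x.1, hxU⟩)
      fun z ⟨hle, hzU⟩ => (eq_of_le_of_ncard_dom_le hle (hmax z hzU)).symm
  exact ⟨x, hxU, hx ▸ (isOpen_setOf_le hshift x).inter hU⟩

end ISemi

theorem stmt16_general (ι : Type*) (n : ℕ)
    [TopologicalSpace (ISemi.Elem ι n)] [T1Space (ISemi.Elem ι n)]
    (hshift : ISemi.ShiftContinuous ι n)
    (hN : ISemi.YCompact (ISemi.Elem ι n) ℕ) :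
    ISemi.FeeblyCompact (ISemi.Elem ι n) :=
  feeblyCompact_of_yCompact_nat (fun _ hU hne => ISemi.exists_isOpen_singleton_mem hshift hU hne) hN

theorem stmt16 (ι : Type*) [Infinite ι] (n : ℕ) (hn : 0 < n)
    [TopologicalSpace (ISemi.Elem ι n)] [T1Space (ISemi.Elem ι n)]
    (hshift : ISemi.ShiftContinuous ι n)
    (hN : ISemi.YCompact (ISemi.Elem ι n) ℕ) :
    ISemi.FeeblyCompact (ISemi.Elem ι n) :=
  stmt16_general ι n hshift hN
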